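/- arXiv:2106.07705 — 4 statements merged into one kernel-verified Lean document; each statement's English description precedes it below -/
import Mathlib

section
/- Let p > 1, q = p/(p−1), β > 0, and let f : ℝ → ℝ be continuous with primitive F(s) = ∫₀ˢ f(t) dt. Assume: (i) there exist θ > β and s₀ > 0 such that s·f(s) ≥ θ·F(s) > 0 for all |s| > s₀ (the Ambrosetti–Rabinowitz condition), and (ii) f(s)/|s|^{p-1} → 0 as |s| → ∞. Then there exist C > 0 and s₁ ≥ s₀ such that C·|f(s)|^q ≤ s·f(s) − β·F(s) for all |s| > s₁. -/
/-!
Taking `δ = 1` in the growth condition, `|f s| ≤ |s|^(p-1)` for large `|s|`; since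
`(p - 1)(q - 1) = 1` this gives `|f s|^q = |f s|^(q-1) |f s| ≤ |s| |f s| = s f s`.
The Ambrosetti–Rabinowitz condition gives `β F s ≤ (β/θ) s f s`, so `C = 1 - β/θ` works.
-/

lemma Real.rpow_le_mul_of_le_rpow_sub_one {p q a b : ℝ} (hpq : p.HolderConjugate q)
    (ha : 0 ≤ a) (hb : 0 ≤ b) (h : b ≤ a ^ (p - 1)) : b ^ q ≤ a * b := by
  have hexp : (p - 1) * (q - 1) = 1 := by linear_combination hpq.mul_eq_add
  calc b ^ q = b ^ (q - 1) * b := by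
        rw [← Real.rpow_add_one' hb (by simpa using hpq.symm.ne_zero)]; ring_nf
    _ ≤ (a ^ (p - 1)) ^ (q - 1) * b := by gcongr; exact hpq.symm.sub_one_pos.le
    _ = a * b := by rw [← Real.rpow_mul ha, hexp, Real.rpow_one]

theorem stmt_6_general (p q β : ℝ) (hp : 1 < p) (hq : q = p / (p - 1)) (hβ : 0 < β)
    (f : ℝ → ℝ)
    (F : ℝ → ℝ)
    (θ s₀ : ℝ) (hθ : β < θ)
    (hAR : ∀ s : ℝ, s₀ < |s| → θ * F s ≤ s * f s ∧ 0 < F s)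
    (hlim : ∀ δ : ℝ, 0 < δ → ∃ R : ℝ, 0 < R ∧ ∀ s : ℝ, R ≤ |s| → |f s| ≤ δ * |s| ^ (p - 1)) :
    ∃ C : ℝ, 0 < C ∧ ∃ s₁ : ℝ, s₀ ≤ s₁ ∧
      ∀ s : ℝ, s₁ < |s| → C * |f s| ^ q ≤ s * f s - β * F s := by
  obtain ⟨R, -, hR⟩ := hlim 1 one_pos
  have hpq : p.HolderConjugate q := (Real.holderConjugate_iff_eq_conjExponent hp).2 hq
  have hθ0 : 0 < θ := hβ.trans hθ
  have hC : 0 < 1 - β / θ := by rw [sub_pos, div_lt_one hθ0]; exact hθ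
  refine ⟨1 - β / θ, hC, max s₀ R, le_max_left _ _, fun s hs => ?_⟩
  obtain ⟨hθF, hF0⟩ := hAR s ((le_max_left _ _).trans_lt hs)
  have hsf : 0 < s * f s := (mul_pos hθ0 hF0).trans_le hθF
  have hgrowth : |f s| ^ q ≤ s * f s := by
    have := Real.rpow_le_mul_of_le_rpow_sub_one hpq (abs_nonneg s) (abs_nonneg (f s))
      (by simpa using hR s ((le_max_right _ _).trans hs.le))
    rwa [← abs_mul, abs_of_pos hsf] at this
  have hβF : β * F s ≤ β / θ * (s * f s) :=
    calc β * F s = β / θ * (θ * F s) := by field_simp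
      _ ≤ β / θ * (s * f s) := by gcongr
  calc (1 - β / θ) * |f s| ^ q ≤ (1 - β / θ) * (s * f s) := by gcongr
    _ ≤ s * f s - β * F s := by linarith

/-- The Ambrosetti–Rabinowitz condition together with the
quasicritical growth condition implies the paper's condition `(H₁)`:
`C * |f s|^q ≤ s * f s - β * F s` for `|s|` large, where `q = p/(p-1)`. -/
theorem stmt_6 (p q β : ℝ) (hp : 1 < p) (hq : q = p / (p - 1)) (hβ : 0 < β)
    (f : ℝ → ℝ) (hf : Continuous f)
    (F : ℝ → ℝ) (hF : ∀ s : ℝ, F s = ∫ t in (0:ℝ)..s, f t)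
    (θ s₀ : ℝ) (hθ : β < θ) (hs₀ : 0 < s₀)
    (hAR : ∀ s : ℝ, s₀ < |s| → θ * F s ≤ s * f s ∧ 0 < F s)
    (hlim : ∀ δ : ℝ, 0 < δ → ∃ R : ℝ, 0 < R ∧ ∀ s : ℝ, R ≤ |s| → |f s| ≤ δ * |s| ^ (p - 1)) :
    ∃ C : ℝ, 0 < C ∧ ∃ s₁ : ℝ, s₀ ≤ s₁ ∧
      ∀ s : ℝ, s₁ < |s| → C * |f s| ^ q ≤ s * f s - β * F s :=
  stmt_6_general p q β hp hq hβ f F θ s₀ hθ hAR hlim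
end

section
/- Let Ω ⊂ ℝ^N be a bounded measurable set equipped with Lebesgue measure, let p > 1, and let f : ℝ → ℝ be continuous with f(s)/|s|^{p-1} → 0 as |s| → ∞. Let K : Ω → ℝ be measurable with 0 ≤ K(x) ≤ κ for a.e. x. Let u and (u_n) be measurable functions on Ω such that ∫_Ω |u_n − u| dx → 0, sup_n ∫_Ω |u_n|^p dx < ∞, and sup_n ∫_Ω |u_n − u|^p dx < ∞. Then ∫_Ω K(x)·f(u_n(x))·(u_n(x) − u(x)) dx → 0 as n → ∞. -/
/-!
For every `δ > 0` continuity and the growth condition give `|f s| ≤ δ |s|^(p-1) + C_δ`, and Young's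
inequality turns this into `|f s| |t| ≤ δ (|s|^p + |t|^p) + C_δ |t|`. Integrating with
`s = u_n`, `t = u_n - u` bounds the integral by `δ` times a constant (the uniform `L^p` bounds)
plus `C_δ ‖u_n - u‖₁`, so its limsup is at most a constant times `δ`.
-/

open MeasureTheory Filter Topology

lemma rpow_sub_one_mul_le_rpow_add_rpow {p a b : ℝ} (hp : 1 ≤ p) (ha : 0 ≤ a) (hb : 0 ≤ b) :
    a ^ (p - 1) * b ≤ a ^ p + b ^ p := by
  have hab : 0 ≤ max a b := ha.trans (le_max_left a b)
  have hmax : max a b ^ p ≤ a ^ p + b ^ p := by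
    rcases max_choice a b with h | h <;> rw [h]
    · linarith [Real.rpow_nonneg hb p]
    · linarith [Real.rpow_nonneg ha p]
  calc a ^ (p - 1) * b ≤ max a b ^ (p - 1) * max a b :=
        mul_le_mul (Real.rpow_le_rpow ha (le_max_left a b) (by linarith)) (le_max_right a b) hb
          (by positivity)
    _ = max a b ^ p := by
        rw [← Real.rpow_add_one' hab (by linarith), sub_add_cancel]
    _ ≤ a ^ p + b ^ p := hmax

lemma abs_mul_le_mul_rpow_add_rpow_add {p δ C y s t : ℝ} (hp : 1 ≤ p) (hδ : 0 ≤ δ)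
    (hy : |y| ≤ δ * |s| ^ (p - 1) + C) : |y * t| ≤ δ * (|s| ^ p + |t| ^ p) + C * |t| := by
  have hyoung := rpow_sub_one_mul_le_rpow_add_rpow hp (abs_nonneg s) (abs_nonneg t)
  calc |y * t| = |y| * |t| := abs_mul y t
    _ ≤ (δ * |s| ^ (p - 1) + C) * |t| := by gcongr
    _ = δ * (|s| ^ (p - 1) * |t|) + C * |t| := by ring
    _ ≤ δ * (|s| ^ p + |t| ^ p) + C * |t| := by gcongr

lemma Continuous.exists_abs_le_mul_rpow_add {f : ℝ → ℝ} (hf : Continuous f) {q δ R : ℝ}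
    (hδ : 0 ≤ δ) (hR : ∀ s, R ≤ |s| → |f s| ≤ δ * |s| ^ q) :
    ∃ C, ∀ s, |f s| ≤ δ * |s| ^ q + C := by
  obtain ⟨C, hC⟩ := isCompact_Icc.exists_bound_of_continuousOn (s := Set.Icc (-R) R)
    hf.continuousOn
  refine ⟨max C 0, fun s => ?_⟩
  have hpow : 0 ≤ δ * |s| ^ q := by positivity
  rcases le_or_gt R |s| with h | h
  · linarith [hR s h, le_max_right C 0]
  · linarith [hC s (abs_le.mp h.le), le_max_left C 0, Real.norm_eq_abs (f s)]

lemma Continuous.exists_abs_mul_le_rpow_add_rpow {f : ℝ → ℝ} (hf : Continuous f) {p : ℝ}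
    (hp : 1 ≤ p) (hlim : ∀ δ > 0, ∃ R, ∀ s, R ≤ |s| → |f s| ≤ δ * |s| ^ (p - 1)) :
    ∀ δ > 0, ∃ C, ∀ s t, |f s * t| ≤ δ * (|s| ^ p + |t| ^ p) + C * |t| := by
  intro δ hδ
  obtain ⟨R, hR⟩ := hlim δ hδ
  obtain ⟨C, hC⟩ := hf.exists_abs_le_mul_rpow_add hδ.le hR
  exact ⟨C, fun s t => abs_mul_le_mul_rpow_add_rpow_add hp hδ.le (hC s)⟩

lemma tendsto_zero_of_norm_le_mul_add {ι E : Type*} [SeminormedAddCommGroup E] {l : Filter ι}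
    {x : ι → E} {y : ι → ℝ} {A : ℝ} (hy : Tendsto y l (𝓝 0))
    (h : ∀ δ > 0, ∃ C, ∀ i, ‖x i‖ ≤ δ * A + C * y i) : Tendsto x l (𝓝 0) := by
  rw [Metric.tendsto_nhds]
  intro ε hε
  have hA : 0 < 2 * (|A| + 1) := by positivity
  obtain ⟨C, hC⟩ := h (ε / (2 * (|A| + 1))) (by positivity)
  have hδA : ε / (2 * (|A| + 1)) * A < ε / 2 := by
    rw [div_mul_eq_mul_div, div_lt_div_iff₀ hA two_pos]
    nlinarith [le_abs_self A]
  have hCy : ∀ᶠ i in l, C * y i < ε / 2 := by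
    have := hy.const_mul C
    rw [mul_zero] at this
    exact this.eventually (gt_mem_nhds (half_pos hε))
  filter_upwards [hCy] with i hi
  rw [dist_zero_right]
  linarith [hC i]

section Integral

variable {α ι : Type*} [MeasurableSpace α] {μ : Measure α} {l : Filter ι}

lemma tendsto_integral_zero_of_norm_le_mul_add {E : Type*} [NormedAddCommGroup E]
    [NormedSpace ℝ E] {g : ι → α → E} {a b : ι → α → ℝ}
    (ha : ∀ i, Integrable (a i) μ) (hb : ∀ i, Integrable (b i) μ)
    (hA : BddAbove (Set.range fun i => ∫ x, a i x ∂μ))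
    (hb0 : Tendsto (fun i => ∫ x, b i x ∂μ) l (𝓝 0))
    (hg : ∀ δ > 0, ∃ C, ∀ i, ∀ᵐ x ∂μ, ‖g i x‖ ≤ δ * a i x + C * b i x) :
    Tendsto (fun i => ∫ x, g i x ∂μ) l (𝓝 0) := by
  obtain ⟨A, hA⟩ := hA
  refine tendsto_zero_of_norm_le_mul_add (A := A) hb0 fun δ hδ => ?_
  obtain ⟨C, hC⟩ := hg δ hδ
  refine ⟨C, fun i => ?_⟩
  calc ‖∫ x, g i x ∂μ‖ ≤ ∫ x, δ * a i x + C * b i x ∂μ :=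
        norm_integral_le_of_norm_le (((ha i).const_mul δ).add ((hb i).const_mul C)) (hC i)
    _ = δ * ∫ x, a i x ∂μ + C * ∫ x, b i x ∂μ := by
        rw [integral_add ((ha i).const_mul δ) ((hb i).const_mul C), integral_const_mul,
          integral_const_mul]
    _ ≤ δ * A + C * ∫ x, b i x ∂μ := by gcongr; exact hA ⟨i, rfl⟩

-- `|t| ≤ 1 + |t|^p` is Young's inequality with `a = 1`.
lemma integrable_of_integrable_abs_rpow [IsFiniteMeasure μ] {p : ℝ} {v : α → ℝ} (hp : 1 ≤ p)
    (hv : AEStronglyMeasurable v μ) (hvp : Integrable (fun x => |v x| ^ p) μ) : Integrable v μ :=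
  ((integrable_const 1).add hvp).mono' hv <| ae_of_all _ fun x => by
    simpa using rpow_sub_one_mul_le_rpow_add_rpow hp zero_le_one (abs_nonneg (v x))

variable {F : ι → α → ℝ} (hF : ∀ i, AEStronglyMeasurable (F i) μ) (hF0 : ∀ i, 0 ≤ᵐ[μ] F i)
  (hbd : (⨆ i, ∫⁻ x, ENNReal.ofReal (F i x) ∂μ) < ⊤)
include hF hF0 hbd

lemma integrable_of_iSup_lintegral_ofReal_lt_top (i : ι) : Integrable (F i) μ :=
  ⟨hF i, (hasFiniteIntegral_iff_ofReal (hF0 i)).2 <|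
    (le_iSup (fun i => ∫⁻ x, ENNReal.ofReal (F i x) ∂μ) i).trans_lt hbd⟩

lemma bddAbove_range_integral_of_iSup_lintegral_ofReal_lt_top :
    BddAbove (Set.range fun i => ∫ x, F i x ∂μ) := by
  refine ⟨(⨆ i, ∫⁻ x, ENNReal.ofReal (F i x) ∂μ).toReal, Set.forall_mem_range.2 fun i => ?_⟩
  rw [integral_eq_lintegral_of_nonneg_ae (hF0 i) (hF i)]
  exact ENNReal.toReal_mono hbd.ne (le_iSup (fun i => ∫⁻ x, ENNReal.ofReal (F i x) ∂μ) i)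

end Integral

theorem stmt_12_general (N : ℕ) (Ω : Set (Fin N → ℝ)) (hΩb : Bornology.IsBounded Ω)
    (p : ℝ) (hp : 1 < p)
    (f : ℝ → ℝ) (hf : Continuous f)
    (hlim : ∀ δ : ℝ, 0 < δ → ∃ R : ℝ, 0 < R ∧ ∀ s : ℝ, R ≤ |s| → |f s| ≤ δ * |s| ^ (p - 1))
    (K : (Fin N → ℝ) → ℝ) (κ : ℝ)
    (hK : ∀ᵐ x ∂(volume.restrict Ω), 0 ≤ K x ∧ K x ≤ κ)
    (u : (Fin N → ℝ) → ℝ) (hum : Measurable u)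
    (un : ℕ → (Fin N → ℝ) → ℝ) (hunm : ∀ n, Measurable (un n))
    (hL1 : Tendsto (fun n => ∫ x in Ω, |un n x - u x|) atTop (𝓝 0))
    (hbd : (⨆ n, ∫⁻ x in Ω, ENNReal.ofReal (|un n x| ^ p)) < ⊤)
    (hbd' : (⨆ n, ∫⁻ x in Ω, ENNReal.ofReal (|un n x - u x| ^ p)) < ⊤) :
    Tendsto (fun n => ∫ x in Ω, K x * (f (un n x) * (un n x - u x))) atTop (𝓝 0) := by
  have : IsFiniteMeasure (volume.restrict Ω) :=
    isFiniteMeasure_restrict.2 hΩb.measure_lt_top.ne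
  have hdiff : ∀ n, Measurable fun x => un n x - u x := fun n => (hunm n).sub hum
  have hpow := integrable_of_iSup_lintegral_ofReal_lt_top
    (fun n => ((hunm n).abs.pow_const p).aestronglyMeasurable)
    (fun n => ae_of_all _ fun x => by positivity) hbd
  have hpow' := integrable_of_iSup_lintegral_ofReal_lt_top
    (fun n => ((hdiff n).abs.pow_const p).aestronglyMeasurable)
    (fun n => ae_of_all _ fun x => by positivity) hbd'
  obtain ⟨S, hS⟩ := bddAbove_range_integral_of_iSup_lintegral_ofReal_lt_top
    (fun n => (hpow n).1) (fun n => ae_of_all _ fun x => by positivity) hbd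
  obtain ⟨S', hS'⟩ := bddAbove_range_integral_of_iSup_lintegral_ofReal_lt_top
    (fun n => (hpow' n).1) (fun n => ae_of_all _ fun x => by positivity) hbd'
  have hgrowth := hf.exists_abs_mul_le_rpow_add_rpow hp.le fun δ hδ =>
    (hlim δ hδ).imp fun _ => And.right
  have hκ : 0 ≤ max κ 0 := le_max_right κ 0
  refine tendsto_integral_zero_of_norm_le_mul_add
    (a := fun n x => max κ 0 * (|un n x| ^ p + |un n x - u x| ^ p))
    (fun n => ((hpow n).add (hpow' n)).const_mul _)
    (fun n => (integrable_of_integrable_abs_rpow hp.le (hdiff n).aestronglyMeasurable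
      (hpow' n)).abs)
    ⟨max κ 0 * (S + S'), Set.forall_mem_range.2 fun n => ?_⟩ hL1 fun δ hδ => ?_
  · rw [integral_const_mul, integral_add (hpow n) (hpow' n)]
    exact mul_le_mul_of_nonneg_left (add_le_add (hS ⟨n, rfl⟩) (hS' ⟨n, rfl⟩)) hκ
  obtain ⟨C, hC⟩ := hgrowth δ hδ
  refine ⟨max κ 0 * C, fun n => ?_⟩
  filter_upwards [hK] with x ⟨hK0, hKκ⟩
  calc ‖K x * (f (un n x) * (un n x - u x))‖ = |K x| * |f (un n x) * (un n x - u x)| := by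
        rw [Real.norm_eq_abs, abs_mul]
    _ ≤ max κ 0 * (δ * (|un n x| ^ p + |un n x - u x| ^ p) + C * |un n x - u x|) :=
        mul_le_mul ((abs_of_nonneg hK0).trans_le (hKκ.trans (le_max_left κ 0)))
          (hC _ _) (abs_nonneg _) hκ
    _ = _ := by ring

/-- Claim (6.4) of the paper. If `Ω ⊂ ℝ^N` is bounded measurable,
`f` continuous with `f(s)/|s|^(p-1) → 0` as `|s| → ∞`, `0 ≤ K ≤ κ` a.e.,
`∫_Ω |u_n - u| → 0` and `∫_Ω |u_n|^p`, `∫_Ω |u_n - u|^p` are uniformly bounded,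
then `∫_Ω K f(u_n)(u_n - u) → 0`. -/
theorem stmt_12 (N : ℕ) (Ω : Set (Fin N → ℝ)) (hΩb : Bornology.IsBounded Ω)
    (hΩm : MeasurableSet Ω) (p : ℝ) (hp : 1 < p)
    (f : ℝ → ℝ) (hf : Continuous f)
    (hlim : ∀ δ : ℝ, 0 < δ → ∃ R : ℝ, 0 < R ∧ ∀ s : ℝ, R ≤ |s| → |f s| ≤ δ * |s| ^ (p - 1))
    (K : (Fin N → ℝ) → ℝ) (hKm : Measurable K) (κ : ℝ)
    (hK : ∀ᵐ x ∂(volume.restrict Ω), 0 ≤ K x ∧ K x ≤ κ)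
    (u : (Fin N → ℝ) → ℝ) (hum : Measurable u)
    (un : ℕ → (Fin N → ℝ) → ℝ) (hunm : ∀ n, Measurable (un n))
    (hL1 : Tendsto (fun n => ∫ x in Ω, |un n x - u x|) atTop (𝓝 0))
    (hbd : (⨆ n, ∫⁻ x in Ω, ENNReal.ofReal (|un n x| ^ p)) < ⊤)
    (hbd' : (⨆ n, ∫⁻ x in Ω, ENNReal.ofReal (|un n x - u x| ^ p)) < ⊤) :
    Tendsto (fun n => ∫ x in Ω, K x * (f (un n x) * (un n x - u x))) atTop (𝓝 0) :=
  stmt_12_general N Ω hΩb p hp f hf hlim K κ hK u hum un hunm hL1 hbd hbd'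
end

section
/- Let 1 < β < p and q ≥ 1 be real numbers, define f(s) = s^{β-1}·(log s)^q for s ≥ 1, and let F(s) = ∫₁ˢ f(t) dt. Then there exist C > 0 and s₀ > 1 such that C·(f(s))^{p/(p-1)} ≤ s·f(s) − β·F(s) for all s ≥ s₀. -/
/-!
Write `G(s) = s f(s) - β F(s)`. Then `G(1) = 0` and `G' = q s^(β-1) (log s)^(q-1)`, so
`G(s) = q ∫₁ˢ t^(β-1) (log t)^(q-1) dt > 0` for `s > 1`. With `p' = p/(p-1)` we have
`f^p' = s^a (log s)^b` for `a = (β-1)p' < β` and `b = q p'`. For `log s ≥ 1` the derivative of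
`s^a (log s)^b` is at most `(a+b) s^(a-1) (log s)^b`, and since `a < β` the power of `s` eventually
beats the power of `log s`, so this is `≤ (a+b) s^(β-1) (log s)^(q-1) = (a+b)/q · G'`. Comparing
derivatives from a large `s₀`, where `G(s₀) > 0`, gives `C f^p' ≤ G` with
`C = min (q/(a+b)) (G(s₀)/f(s₀)^p')`.
-/

open Real Set Filter MeasureTheory intervalIntegral

lemma continuousAt_rpow_mul_log_rpow {c d x : ℝ} (hd : 0 ≤ d) (hx : 0 < x) :
    ContinuousAt (fun s => s ^ c * log s ^ d) x :=
  (continuousAt_rpow_const x c (Or.inl hx.ne')).mul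
    ((continuousAt_rpow_const (log x) d (Or.inr hd)).comp (continuousAt_log hx.ne'))

lemma continuousOn_rpow_mul_log_rpow {c d : ℝ} (hd : 0 ≤ d) :
    ContinuousOn (fun s => s ^ c * log s ^ d) (Ioi 0) :=
  fun _ hx => (continuousAt_rpow_mul_log_rpow hd hx).continuousWithinAt

lemma intervalIntegrable_rpow_mul_log_rpow {c d a b : ℝ} (hd : 0 ≤ d) (ha : 0 < a) (hb : 0 < b) :
    IntervalIntegrable (fun s => s ^ c * log s ^ d) volume a b :=
  ((continuousOn_rpow_mul_log_rpow hd).mono fun _ ht => (lt_min ha hb).trans_le ht.1)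
    |>.intervalIntegrable

lemma hasDerivAt_rpow_mul_log_rpow {c d x : ℝ} (hx : 1 < x) :
    HasDerivAt (fun s => s ^ c * log s ^ d)
      (x ^ (c - 1) * log x ^ (d - 1) * (c * log x + d)) x := by
  have hx0 : 0 < x := one_pos.trans hx
  have hL : 0 < log x := log_pos hx
  have hpow : HasDerivAt (fun s => s ^ c) (c * x ^ (c - 1)) x :=
    hasDerivAt_rpow_const (Or.inl hx0.ne')
  have hlog : HasDerivAt (fun s => log s ^ d) (d * log x ^ (d - 1) * x⁻¹) x :=
    (hasDerivAt_rpow_const (Or.inl hL.ne')).comp x (hasDerivAt_log hx0.ne')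
  refine (hpow.mul hlog).congr_deriv ?_
  rw [rpow_sub_one hx0.ne', rpow_sub_one hL.ne']
  field_simp

lemma hasDerivAt_integral_rpow_mul_log_rpow {c d x : ℝ} (hd : 0 ≤ d) (hx : 0 < x) :
    HasDerivAt (fun s => ∫ t in (1 : ℝ)..s, t ^ c * log t ^ d) (x ^ c * log x ^ d) x :=
  integral_hasDerivAt_right (intervalIntegrable_rpow_mul_log_rpow hd one_pos hx)
    ((continuousOn_rpow_mul_log_rpow hd).stronglyMeasurableAtFilter isOpen_Ioi x hx)
    (continuousAt_rpow_mul_log_rpow hd hx)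

/-- The defect in the Ambrosetti–Rabinowitz condition `s f(s) ≥ β F(s)`. -/
noncomputable def arGap (β q s : ℝ) : ℝ :=
  s * (s ^ (β - 1) * log s ^ q) - β * ∫ t in (1 : ℝ)..s, t ^ (β - 1) * log t ^ q

section arGap

variable {β q : ℝ}

lemma hasDerivAt_arGap (hq : 0 ≤ q) {x : ℝ} (hx : 1 < x) :
    HasDerivAt (arGap β q) (q * (x ^ (β - 1) * log x ^ (q - 1))) x := by
  have hx0 : 0 < x := one_pos.trans hx
  have hL : 0 < log x := log_pos hx
  refine ((hasDerivAt_id x |>.mul (hasDerivAt_rpow_mul_log_rpow hx)).sub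
    ((hasDerivAt_integral_rpow_mul_log_rpow hq hx0).const_mul β)).congr_deriv ?_
  rw [id, rpow_sub_one hx0.ne' (β - 1), rpow_sub_one hL.ne']
  field_simp
  ring

lemma continuousOn_arGap (hq : 0 ≤ q) {s : ℝ} (hs : 1 ≤ s) : ContinuousOn (arGap β q) (Icc 1 s) := by
  have hF : ContinuousOn (fun s => ∫ t in (1 : ℝ)..s, t ^ (β - 1) * log t ^ q) (Icc 1 s) := by
    simpa only [uIcc_of_le hs] using continuousOn_primitive_interval'
      (intervalIntegrable_rpow_mul_log_rpow hq one_pos (one_pos.trans_le hs)) left_mem_uIcc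
  refine (continuousOn_id.mul ?_).sub (continuousOn_const.mul hF)
  exact (continuousOn_rpow_mul_log_rpow hq).mono fun t ht => one_pos.trans_le ht.1

lemma arGap_eq_integral (hq : 1 ≤ q) {s : ℝ} (hs : 1 ≤ s) :
    arGap β q s = q * ∫ t in (1 : ℝ)..s, t ^ (β - 1) * log t ^ (q - 1) := by
  have hq0 : 0 ≤ q := zero_le_one.trans hq
  have hG1 : arGap β q 1 = 0 := by
    simp [arGap, zero_rpow (one_pos.trans_le hq).ne']
  rw [← intervalIntegral.integral_const_mul, integral_eq_sub_of_hasDerivAt_of_le hs (continuousOn_arGap hq0 hs)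
    (fun x hx => hasDerivAt_arGap hq0 hx.1)
    ((intervalIntegrable_rpow_mul_log_rpow (sub_nonneg.2 hq) one_pos
      (one_pos.trans_le hs)).const_mul q), hG1, sub_zero]

lemma arGap_pos (hq : 1 ≤ q) {s : ℝ} (hs : 1 < s) : 0 < arGap β q s := by
  rw [arGap_eq_integral hq hs.le]
  refine mul_pos (one_pos.trans_le hq) (intervalIntegral_pos_of_pos_on
    (intervalIntegrable_rpow_mul_log_rpow (sub_nonneg.2 hq) one_pos (one_pos.trans hs))
    (fun x hx => ?_) hs)
  exact mul_pos (rpow_pos_of_pos (one_pos.trans hx.1) _) (rpow_pos_of_pos (log_pos hx.1) _)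

end arGap

lemma eventually_rpow_mul_log_rpow_le {a b c d : ℝ} (hac : a < c) :
    ∀ᶠ x in atTop, x ^ a * log x ^ b ≤ x ^ c * log x ^ d := by
  filter_upwards [(isLittleO_log_rpow_rpow_atTop (b - d) (sub_pos.2 hac)).bound one_pos,
    eventually_gt_atTop 1] with x hbound hx
  have hx0 : 0 < x := one_pos.trans hx
  have hL : 0 < log x := log_pos hx
  rw [one_mul, norm_of_nonneg (rpow_nonneg hL.le _), norm_of_nonneg (rpow_nonneg hx0.le _)]
    at hbound
  calc x ^ a * log x ^ b = x ^ a * log x ^ d * log x ^ (b - d) := by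
        rw [mul_assoc, ← rpow_add hL]; ring_nf
    _ ≤ x ^ a * log x ^ d * x ^ (c - a) := by gcongr
    _ = x ^ c * log x ^ d := by rw [mul_right_comm, ← rpow_add hx0]; ring_nf

lemma rpow_sub_one_mul_add_le {a b L : ℝ} (hb : 0 ≤ b) (hL : 1 ≤ L) :
    L ^ (b - 1) * (a * L + b) ≤ (a + b) * L ^ b := by
  have hL0 : 0 < L := one_pos.trans_le hL
  calc L ^ (b - 1) * (a * L + b) = (a + b / L) * L ^ b := by
        rw [rpow_sub_one hL0.ne']; field_simp
    _ ≤ (a + b) * L ^ b := by gcongr; exact div_le_self hb hL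

lemma deriv_rpow_mul_log_rpow_le {a b c d C K x : ℝ} (ha : 0 ≤ a) (hb : 0 ≤ b) (hC : 0 ≤ C)
    (hCK : (a + b) * C ≤ K) (hx : 0 < x) (hL : 1 ≤ log x)
    (hpow : x ^ (a - 1) * log x ^ b ≤ x ^ c * log x ^ d) :
    C * (x ^ (a - 1) * log x ^ (b - 1) * (a * log x + b)) ≤ K * (x ^ c * log x ^ d) :=
  calc C * (x ^ (a - 1) * log x ^ (b - 1) * (a * log x + b))
        = C * (x ^ (a - 1) * (log x ^ (b - 1) * (a * log x + b))) := by ring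
    _ ≤ C * (x ^ (a - 1) * ((a + b) * log x ^ b)) := by
        gcongr C * (_ * ?_); exact rpow_sub_one_mul_add_le hb hL
    _ = (a + b) * C * (x ^ (a - 1) * log x ^ b) := by ring
    _ ≤ (a + b) * C * (x ^ c * log x ^ d) := by gcongr
    _ ≤ K * (x ^ c * log x ^ d) := by gcongr

lemma sub_one_mul_div_sub_one_lt {β p : ℝ} (hp : 1 < p) (hβp : β < p) :
    (β - 1) * (p / (p - 1)) < β := by
  rw [mul_div_assoc', div_lt_iff₀ (sub_pos.2 hp)]; linarith

lemma rpow_mul_log_rpow_rpow {c d r s : ℝ} (hs : 1 ≤ s) :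
    (s ^ c * log s ^ d) ^ r = s ^ (c * r) * log s ^ (d * r) := by
  have hL : 0 ≤ log s := log_nonneg hs
  have hs0 : 0 ≤ s := zero_le_one.trans hs
  rw [mul_rpow (rpow_nonneg hs0 _) (rpow_nonneg hL _), rpow_mul hs0, rpow_mul hL]

lemma le_of_hasDerivAt_le {f g f' g' : ℝ → ℝ} {a b : ℝ} (hab : a ≤ b)
    (hf : ∀ x, a ≤ x → HasDerivAt f (f' x) x) (hg : ∀ x, a ≤ x → HasDerivAt g (g' x) x)
    (hle : ∀ x, a ≤ x → f' x ≤ g' x) (ha : f a ≤ g a) : f b ≤ g b :=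
  image_le_of_deriv_right_le_deriv_boundary
    (fun x hx => (hf x hx.1).continuousAt.continuousWithinAt)
    (fun x hx => (hf x hx.1).hasDerivWithinAt) ha
    (fun x hx => (hg x hx.1).continuousAt.continuousWithinAt)
    (fun x hx => (hg x hx.1).hasDerivWithinAt) (fun x hx => hle x hx.1) ⟨hab, le_rfl⟩

/-- For `1 < β < p`, `q ≥ 1`, `f(s) = s^(β-1) (log s)^q` on
`[1,∞)` and `F(s) = ∫ t in 1..s, f t`, there exist `C > 0` and `s₀ > 1` with
`C * f(s)^(p/(p-1)) ≤ s f(s) - β F(s)` for all `s ≥ s₀` (the paper's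
condition `(H₁)` for the model nonlinearity). -/
theorem stmt_16 (β p q : ℝ) (hβ : 1 < β) (hβp : β < p) (hq : 1 ≤ q)
    (f : ℝ → ℝ) (hf : ∀ s : ℝ, 1 ≤ s → f s = s ^ (β - 1) * Real.log s ^ q)
    (F : ℝ → ℝ) (hF : ∀ s : ℝ, F s = ∫ t in (1:ℝ)..s, t ^ (β - 1) * Real.log t ^ q) :
    ∃ C : ℝ, 0 < C ∧ ∃ s₀ : ℝ, 1 < s₀ ∧
      ∀ s : ℝ, s₀ ≤ s → C * f s ^ (p / (p - 1)) ≤ s * f s - β * F s := by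
  have hp1 : 1 < p := hβ.trans hβp
  have hp' : 0 < p / (p - 1) := div_pos (by linarith) (by linarith)
  set a := (β - 1) * (p / (p - 1))
  set b := q * (p / (p - 1))
  have ha : a < β := sub_one_mul_div_sub_one_lt hp1 hβp
  have ha0 : 0 < a := mul_pos (sub_pos.2 hβ) hp'
  have hb0 : 0 < b := mul_pos (by linarith) hp'
  obtain ⟨s₀, hs₀⟩ := ((eventually_gt_atTop 1).and ((tendsto_log_atTop.eventually_ge_atTop 1).and
    (eventually_rpow_mul_log_rpow_le (b := b) (d := q - 1)
      (show a - 1 < β - 1 by linarith)))).exists_forall_of_atTop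
  have hs₀1 : 1 < s₀ := (hs₀ s₀ le_rfl).1
  have hH₀ : 0 < s₀ ^ a * log s₀ ^ b :=
    mul_pos (rpow_pos_of_pos (one_pos.trans hs₀1) _) (rpow_pos_of_pos (log_pos hs₀1) _)
  set C := min (q / (a + b)) (arGap β q s₀ / (s₀ ^ a * log s₀ ^ b))
  have hC : 0 < C := lt_min (by positivity) (div_pos (arGap_pos hq hs₀1) hH₀)
  have hCq : (a + b) * C ≤ q := by
    rw [mul_comm, ← le_div_iff₀ (by positivity)]; exact min_le_left _ _
  refine ⟨C, hC, s₀, hs₀1, fun s hs => ?_⟩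
  have hs1 : 1 ≤ s := hs₀1.le.trans hs
  rw [hf s hs1, hF, rpow_mul_log_rpow_rpow hs1]
  refine le_of_hasDerivAt_le (f := fun s => C * (s ^ a * log s ^ b)) (g := arGap β q) hs
    (fun x hx => (hasDerivAt_rpow_mul_log_rpow (hs₀1.trans_le hx)).const_mul C)
    (fun x hx => hasDerivAt_arGap (by linarith) (hs₀1.trans_le hx)) (fun x hx => ?_)
    ((le_div_iff₀ hH₀).1 (min_le_right _ _))
  obtain ⟨hx1, hL, hpow⟩ := hs₀ x hx
  exact deriv_rpow_mul_log_rpow_le ha0.le hb0.le hC.le hCq (one_pos.trans hx1) hL hpow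
end

section
/- Let 1 < γ₁ < γ₂ and define M : [0,∞) → [0,∞) by M(τ) = τ^{γ₂-1} for 0 ≤ τ ≤ 1 and M(τ) = τ^{γ₁-1} for τ ≥ 1, with M̂(τ) = ∫₀^τ M(z) dz. Then: (i) M is continuous; (ii) for every γ with γ₁ < γ there exists τ₀ ≥ 1 such that τ·M(τ) ≤ γ·M̂(τ) for all τ ≥ τ₀; and (iii) for every γ < γ₂ and every τ with 0 < τ ≤ 1 one has τ·M(τ) > γ·M̂(τ). -/
/-!
On `[0,1]` the primitive is `M̂(τ) = τ^γ₂/γ₂`, so `τ M(τ) = γ₂ M̂(τ)` there and every `γ < γ₂` is too small.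
For `τ ≥ 1` one has `M̂(τ) ≥ (τ^γ₁ - 1)/γ₁`, and `τ^γ₁ ≤ γ (τ^γ₁ - 1)/γ₁` as soon as
`(γ - γ₁) τ^γ₁ ≥ γ`, which holds once `τ ≥ γ/(γ - γ₁)` because `τ^γ₁ ≥ τ`.
-/

open Set intervalIntegral Real

theorem ContinuousOn.Ici_of_Icc_of_Ici {f : ℝ → ℝ} {a b : ℝ} (hab : a ≤ b)
    (h₁ : ContinuousOn f (Icc a b)) (h₂ : ContinuousOn f (Ici b)) :
    ContinuousOn f (Ici a) := by
  rw [← Icc_union_Ici_eq_Ici hab]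
  exact h₁.union_of_isClosed h₂ isClosed_Icc isClosed_Ici

theorem Real.mul_rpow_sub_one {x : ℝ} (hx : x ≠ 0) (p : ℝ) : x * x ^ (p - 1) = x ^ p := by
  rw [rpow_sub_one hx, mul_div_cancel₀ _ hx]

theorem integral_rpow_sub_one {p : ℝ} (hp : 0 < p) (a b : ℝ) :
    ∫ x in a..b, x ^ (p - 1) = (b ^ p - a ^ p) / p := by
  rw [integral_rpow (Or.inl (by linarith)), sub_add_cancel]

theorem integral_zero_rpow_sub_one {p : ℝ} (hp : 0 < p) (b : ℝ) :
    ∫ x in (0:ℝ)..b, x ^ (p - 1) = b ^ p / p := by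
  rw [integral_rpow_sub_one hp, zero_rpow hp.ne', sub_zero]

theorem rpow_le_mul_div_sub_one {γ₁ γ x : ℝ} (hγ₁ : 1 ≤ γ₁) (hγ : γ₁ < γ)
    (hx : γ / (γ - γ₁) ≤ x) (hx₁ : 1 ≤ x) :
    x ^ γ₁ ≤ γ * ((x ^ γ₁ - 1) / γ₁) := by
  have hpow : γ / (γ - γ₁) ≤ x ^ γ₁ := hx.trans (self_le_rpow_of_one_le hx₁ hγ₁)
  rw [div_le_iff₀ (by linarith)] at hpow
  rw [mul_div_assoc', le_div_iff₀ (by linarith)]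
  nlinarith

section KirchhoffFunction

variable {γ₁ γ₂ : ℝ} {M : ℝ → ℝ}

theorem integral_kirchhoff_of_le_one (hγ₂ : 0 < γ₂)
    (hM1 : ∀ τ : ℝ, 0 ≤ τ → τ ≤ 1 → M τ = τ ^ (γ₂ - 1)) {τ : ℝ} (hτ₀ : 0 ≤ τ) (hτ₁ : τ ≤ 1) :
    ∫ z in (0:ℝ)..τ, M z = τ ^ γ₂ / γ₂ := by
  rw [integral_congr (g := fun z => z ^ (γ₂ - 1)), integral_zero_rpow_sub_one hγ₂]
  intro z hz
  rw [uIcc_of_le hτ₀] at hz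
  exact hM1 z hz.1 (hz.2.trans hτ₁)

theorem integral_kirchhoff_of_one_le (hγ₁ : 0 < γ₁) (hγ₂ : 0 < γ₂)
    (hM1 : ∀ τ : ℝ, 0 ≤ τ → τ ≤ 1 → M τ = τ ^ (γ₂ - 1))
    (hM2 : ∀ τ : ℝ, 1 ≤ τ → M τ = τ ^ (γ₁ - 1))
    (hM : ContinuousOn M (Ici 0)) {τ : ℝ} (hτ : 1 ≤ τ) :
    ∫ z in (0:ℝ)..τ, M z = 1 / γ₂ + (τ ^ γ₁ - 1) / γ₁ := by
  have hint : ∀ a b, 0 ≤ a → 0 ≤ b → IntervalIntegrable M MeasureTheory.volume a b :=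
    fun a b ha hb => (hM.mono fun z hz => le_trans (le_min ha hb) hz.1).intervalIntegrable
  rw [← integral_add_adjacent_intervals (hint 0 1 le_rfl zero_le_one) (hint 1 τ zero_le_one
    (by linarith)), integral_kirchhoff_of_le_one (τ := 1) hγ₂ hM1 zero_le_one le_rfl, one_rpow,
    integral_congr (g := fun z => z ^ (γ₁ - 1)), integral_rpow_sub_one hγ₁, one_rpow]
  intro z hz
  rw [uIcc_of_le hτ] at hz
  exact hM2 z hz.1

end KirchhoffFunction

/-- The degenerate Kirchhoff function equal to `τ^(γ₂-1)` on
`[0,1]` and `τ^(γ₁-1)` on `[1,∞)` (with `1 < γ₁ < γ₂`): (i) is continuous on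
`[0,∞)`; (ii) satisfies the relaxed condition `(M₁)` for every `γ > γ₁`
(with some `τ₀ ≥ 1`); (iii) fails the global inequality `τ M(τ) ≤ γ M̂(τ)`
on `(0,1]` for every `γ < γ₂`. -/
theorem stmt_18 (γ₁ γ₂ : ℝ) (hγ₁ : 1 < γ₁) (hγ : γ₁ < γ₂)
    (M Mhat : ℝ → ℝ)
    (hM1 : ∀ τ : ℝ, 0 ≤ τ → τ ≤ 1 → M τ = τ ^ (γ₂ - 1))
    (hM2 : ∀ τ : ℝ, 1 ≤ τ → M τ = τ ^ (γ₁ - 1))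
    (hMhat : ∀ τ : ℝ, 0 ≤ τ → Mhat τ = ∫ z in (0:ℝ)..τ, M z) :
    ContinuousOn M (Set.Ici (0:ℝ)) ∧
    (∀ γ : ℝ, γ₁ < γ → ∃ τ₀ : ℝ, 1 ≤ τ₀ ∧ ∀ τ : ℝ, τ₀ ≤ τ → τ * M τ ≤ γ * Mhat τ) ∧
    (∀ γ : ℝ, γ < γ₂ → ∀ τ : ℝ, 0 < τ → τ ≤ 1 → γ * Mhat τ < τ * M τ) := by
  have hγ₂ : 0 < γ₂ := by linarith
  have hM : ContinuousOn M (Ici 0) := by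
    refine ContinuousOn.Ici_of_Icc_of_Ici zero_le_one ?_ ?_
    · exact (continuousOn_id.rpow_const fun _ _ => Or.inr (by linarith)).congr
        fun τ hτ => hM1 τ hτ.1 hτ.2
    · exact (continuousOn_id.rpow_const fun τ hτ => Or.inl (zero_lt_one.trans_le hτ).ne').congr
        fun τ hτ => hM2 τ hτ
  refine ⟨hM, fun γ hγγ => ⟨max 1 (γ / (γ - γ₁)), le_max_left _ _, fun τ hτ => ?_⟩,
    fun γ hγγ τ hτ₀ hτ₁ => ?_⟩
  · have hτ₁ : 1 ≤ τ := (le_max_left _ _).trans hτ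
    rw [hM2 τ hτ₁, mul_rpow_sub_one (by linarith), hMhat τ (by linarith),
      integral_kirchhoff_of_one_le (by linarith) hγ₂ hM1 hM2 hM hτ₁]
    calc τ ^ γ₁ ≤ γ * ((τ ^ γ₁ - 1) / γ₁) :=
          rpow_le_mul_div_sub_one hγ₁.le hγγ ((le_max_right _ _).trans hτ) hτ₁
      _ ≤ γ * (1 / γ₂ + (τ ^ γ₁ - 1) / γ₁) := by
          gcongr
          · linarith
          · exact le_add_of_nonneg_left (by positivity)
  · rw [hM1 τ hτ₀.le hτ₁, mul_rpow_sub_one hτ₀.ne', hMhat τ hτ₀.le,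
      integral_kirchhoff_of_le_one hγ₂ hM1 hτ₀.le hτ₁, mul_div_assoc', div_lt_iff₀ hγ₂]
    exact mul_lt_mul_of_pos_right hγγ (rpow_pos_of_pos hτ₀ γ₂) |>.trans_eq (mul_comm _ _)
end
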